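/- Let X ⊆ ℝ^d, ρ ≥ 1, P a Borel probability measure on X with finite ρ-th moment, R = {R_1,…,R_N} a measurable partition of X, C = {c_1,…,c_N} ⊂ X a set of locations, and f : X → Y ⊆ ℝ^q measurable with all relevant pushforwards having finite ρ-th moments. Let π_j := P(R_j) and θ_d := ( Σ_{k=1}^N ∫_{R_k} ‖x − c_k‖^ρ dP(x) )^{1/ρ}. Then for any θ ≥ 0, sup_{Q ∈ B_θ(P)} W_ρ(f#Q, f#Δ_{R,C}#P) ≤ ( inf_{λ ≥ 0} { λ (θ + θ_d)^ρ + Σ_{j=1}^N π_j sup_{ξ ∈ X} ( ‖f(ξ) − f(c_j)‖^ρ − λ ‖ξ − c_j‖^ρ ) } )^{1/ρ}. -/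

import Mathlib

/-!
Push a coupling `γ` of `(P, Q)` forward by `(x, y) ↦ (f y, f (Δ x))`, `Δ = Δ_{R,C}`: this couples
`f#Q` with `f#Δ#P`. For `x ∈ R_j` and `y ∈ X` the choice of `s_j` gives
`‖f y - f (Δ x)‖^ρ ≤ λ ‖y - Δ x‖^ρ + s_j`. Integrating against `γ`, the last term contributes
`Σ_j π_j s_j`, while by Minkowski `‖y - Δ x‖_{L^ρ(γ)} ≤ ‖y - x‖_{L^ρ(γ)} + ‖x - Δ x‖_{L^ρ(P)}`,
where the second norm is `θ_d`. The resulting bound is a continuous increasing function of the cost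
of `γ`, so it passes to the infimum over couplings, which is at most `θ^ρ`.
-/

open MeasureTheory ENNReal

noncomputable section

/-- `ℝ^d` with the Euclidean norm. -/
abbrev Euc (d : ℕ) : Type := EuclideanSpace ℝ (Fin d)

/-- The set of couplings `Γ(μ, ν)` of two measures: probability measures on the product
whose first marginal is `μ` and second marginal is `ν`. -/
def Couplings {β : Type*} [MeasurableSpace β] (μ ν : Measure β) :
    Set (Measure (β × β)) :=
  {γ | IsProbabilityMeasure γ ∧ γ.map Prod.fst = μ ∧ γ.map Prod.snd = ν}

/-- The ρ-Wasserstein distance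
`W_ρ(μ, ν) = (inf_{γ ∈ Γ(μ,ν)} ∫ ‖x - y‖^ρ dγ(x,y))^{1/ρ}`. -/
noncomputable def Wass {β : Type*} [MeasurableSpace β] [NormedAddCommGroup β]
    (ρ : ℝ) (μ ν : Measure β) : ℝ :=
  ((⨅ γ ∈ Couplings μ ν, ∫⁻ p, ENNReal.ofReal (‖p.1 - p.2‖ ^ ρ) ∂γ).toReal) ^ (1/ρ)

/-- `μ` has finite ρ-th moment: `∫ ‖x‖^ρ dμ(x) < ∞`. -/
def HasFiniteMoment {β : Type*} [MeasurableSpace β] [NormedAddCommGroup β]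
    (ρ : ℝ) (μ : Measure β) : Prop :=
  ∫⁻ x, ENNReal.ofReal (‖x‖ ^ ρ) ∂μ < ⊤

/-- A measurable partition of a set `X` into `N` regions. -/
def IsMeasPartition {β : Type*} [MeasurableSpace β] {N : ℕ}
    (R : Fin N → Set β) (X : Set β) : Prop :=
  (∀ i, MeasurableSet (R i)) ∧ (⋃ i, R i) = X ∧ ∀ i j, i ≠ j → R i ∩ R j = ∅

/-- The quantization operator `Δ_{R,C}(x) = Σ_i c_i 1_{R_i}(x)`. -/
noncomputable def quantMap {β : Type*} [AddCommMonoid β] {N : ℕ}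
    (R : Fin N → Set β) (c : Fin N → β) (x : β) : β :=
  ∑ i, (R i).indicator (fun _ => c i) x

open Function
open scoped NNReal

lemma le_apply_biInf_of_continuous {ι α β : Type*} [CompleteLinearOrder α] [TopologicalSpace α]
    [OrderTopology α] [TopologicalSpace β] [Preorder β] [OrderClosedTopology β]
    {C : Set ι} (hC : C.Nonempty) {g : ι → α} {φ : α → β} (hφ : Continuous φ) {b : β}
    (h : ∀ i ∈ C, b ≤ φ (g i)) : b ≤ φ (⨅ i ∈ C, g i) := by
  rw [← sInf_image]
  refine (isClosed_le continuous_const hφ).closure_subset_iff.mpr ?_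
    (sInf_mem_closure (hC.image g))
  rintro _ ⟨i, hi, rfl⟩
  exact h i hi

section Transport

variable {α E : Type*} [MeasurableSpace α] [NormedAddCommGroup E] {ρ : ℝ}

lemma lintegral_ofReal_norm_rpow (hρ : 0 < ρ) (g : α → E) (μ : Measure α) :
    ∫⁻ x, ENNReal.ofReal (‖g x‖ ^ ρ) ∂μ = eLpNorm g (ENNReal.ofReal ρ) μ ^ ρ := by
  rw [eLpNorm_eq_eLpNorm' (by simpa using hρ) ofReal_ne_top, toReal_ofReal hρ.le,
    ← lintegral_rpow_enorm_eq_rpow_eLpNorm' hρ]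
  refine lintegral_congr fun x => ?_
  rw [← ofReal_norm, ofReal_rpow_of_nonneg (norm_nonneg _) hρ.le]

lemma lintegral_ofReal_norm_rpow_rpow_inv (hρ : 0 < ρ) (g : α → E) (μ : Measure α) :
    (∫⁻ x, ENNReal.ofReal (‖g x‖ ^ ρ) ∂μ) ^ (1 / ρ) = eLpNorm g (ENNReal.ofReal ρ) μ := by
  rw [lintegral_ofReal_norm_rpow hρ, ← ENNReal.rpow_mul, mul_one_div_cancel hρ.ne',
    ENNReal.rpow_one]

lemma HasFiniteMoment.memLp [MeasurableSpace E] [OpensMeasurableSpace E]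
    [SecondCountableTopology E] {μ : Measure E} (hρ : 0 < ρ) (h : HasFiniteMoment ρ μ) :
    MemLp id (ENNReal.ofReal ρ) μ := by
  refine ⟨aestronglyMeasurable_id, ?_⟩
  rw [← ENNReal.rpow_lt_top_iff_of_pos hρ, ← lintegral_ofReal_norm_rpow hρ]
  exact h

variable [MeasurableSpace E]

/-- The infimum inside `Wass`, i.e. `W_ρ(μ, ν) ^ ρ` as an extended real. -/
def transportCost (ρ : ℝ) (μ ν : Measure E) : ℝ≥0∞ :=
  ⨅ γ ∈ Couplings μ ν, ∫⁻ p, ENNReal.ofReal (‖p.1 - p.2‖ ^ ρ) ∂γ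

lemma prod_mem_couplings {β : Type*} [MeasurableSpace β] (μ ν : Measure β)
    [IsProbabilityMeasure μ] [IsProbabilityMeasure ν] : μ.prod ν ∈ Couplings μ ν :=
  ⟨inferInstance, by simp [Measure.map_fst_prod], by simp [Measure.map_snd_prod]⟩

lemma transportCost_le_lintegral_map [BorelSpace E] [SecondCountableTopology E]
    {μ ν : Measure α} {γ : Measure (α × α)} (hγ : γ ∈ Couplings μ ν) {g h : α → E}
    (hg : Measurable g) (hh : Measurable h) :
    transportCost ρ (ν.map g) (μ.map h) ≤ ∫⁻ p, ENNReal.ofReal (‖g p.2 - h p.1‖ ^ ρ) ∂γ := by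
  obtain ⟨hγP, hγμ, hγν⟩ := hγ
  have hm : Measurable fun p : α × α => (g p.2, h p.1) :=
    (hg.comp measurable_snd).prodMk (hh.comp measurable_fst)
  have hcoupling : γ.map (fun p => (g p.2, h p.1)) ∈ Couplings (ν.map g) (μ.map h) := by
    refine ⟨Measure.isProbabilityMeasure_map hm.aemeasurable, ?_, ?_⟩
    · rw [Measure.map_map measurable_fst hm, ← hγν, Measure.map_map hg measurable_snd]; rfl
    · rw [Measure.map_map measurable_snd hm, ← hγμ, Measure.map_map hh measurable_fst]; rfl
  refine (iInf₂_le _ hcoupling).trans_eq ?_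
  exact lintegral_map ((measurable_fst.sub measurable_snd).norm.pow_const ρ).ennreal_ofReal hm

lemma transportCost_ne_top [OpensMeasurableSpace E] [SecondCountableTopology E]
    {μ ν : Measure E} [IsProbabilityMeasure μ] [IsProbabilityMeasure ν] (hρ : 0 < ρ)
    (hμ : HasFiniteMoment ρ μ) (hν : HasFiniteMoment ρ ν) : transportCost ρ μ ν ≠ ⊤ := by
  have hγ := prod_mem_couplings μ ν
  have hfst : MemLp Prod.fst (ENNReal.ofReal ρ) (μ.prod ν) :=
    (hγ.2.1 ▸ hμ.memLp hρ).comp_of_map measurable_fst.aemeasurable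
  have hsnd : MemLp Prod.snd (ENNReal.ofReal ρ) (μ.prod ν) :=
    (hγ.2.2 ▸ hν.memLp hρ).comp_of_map measurable_snd.aemeasurable
  refine ne_top_of_le_ne_top ?_ (iInf₂_le _ hγ)
  rw [lintegral_ofReal_norm_rpow hρ]
  exact ENNReal.rpow_ne_top_of_nonneg hρ.le (hfst.sub hsnd).eLpNorm_ne_top

/-- `Wass` reads the cost through `toReal`, which sends `⊤` to `0`: hence `hfin`. -/
lemma transportCost_le_of_wass_le {μ ν : Measure E} {θ : ℝ} (hρ : 0 < ρ)
    (hfin : transportCost ρ μ ν ≠ ⊤) (hW : Wass ρ μ ν ≤ θ) :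
    transportCost ρ μ ν ≤ ENNReal.ofReal θ ^ ρ := by
  have hθ : 0 ≤ θ := (Real.rpow_nonneg toReal_nonneg _).trans hW
  rw [← ofReal_toReal hfin, ofReal_rpow_of_nonneg hθ hρ.le]
  refine ofReal_le_ofReal ?_
  calc (transportCost ρ μ ν).toReal = ((transportCost ρ μ ν).toReal ^ (1 / ρ)) ^ ρ := by
        rw [← Real.rpow_mul toReal_nonneg, one_div_mul_cancel hρ.ne', Real.rpow_one]
    _ ≤ θ ^ ρ := Real.rpow_le_rpow (Real.rpow_nonneg toReal_nonneg _) hW hρ.le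

lemma wass_le_of_transportCost_le {μ ν : Measure E} {b : ℝ} (hρ : 0 < ρ) (hb : 0 ≤ b)
    (h : transportCost ρ μ ν ≤ ENNReal.ofReal b) : Wass ρ μ ν ≤ b ^ (1 / ρ) :=
  Real.rpow_le_rpow toReal_nonneg (toReal_le_of_le_ofReal hb h) (by positivity)

lemma le_of_forall_mem_couplings [OpensMeasurableSpace E] [SecondCountableTopology E]
    {μ ν : Measure E} [IsProbabilityMeasure μ] [IsProbabilityMeasure ν] (hρ : 0 < ρ)
    (hμ : HasFiniteMoment ρ μ) (hν : HasFiniteMoment ρ ν) {θ : ℝ} (hW : Wass ρ μ ν ≤ θ)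
    {a l e b : ℝ≥0∞} (hl : l ≠ ⊤)
    (h : ∀ γ ∈ Couplings μ ν,
      a ≤ l * ((∫⁻ p, ENNReal.ofReal (‖p.1 - p.2‖ ^ ρ) ∂γ) ^ (1 / ρ) + e) ^ ρ + b) :
    a ≤ l * (ENNReal.ofReal θ + e) ^ ρ + b := by
  set φ : ℝ≥0∞ → ℝ≥0∞ := fun t => l * (t ^ (1 / ρ) + e) ^ ρ + b
  have hφ : Continuous φ :=
    ((ENNReal.continuous_const_mul hl).comp (ENNReal.continuous_rpow_const.comp
      (ENNReal.continuous_rpow_const.add continuous_const))).add continuous_const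
  have hφmono : Monotone φ := fun t u htu => by
    simp only [φ]; gcongr
  have hcost : transportCost ρ μ ν ≤ ENNReal.ofReal θ ^ ρ :=
    transportCost_le_of_wass_le hρ (transportCost_ne_top hρ hμ hν) hW
  calc a ≤ φ (transportCost ρ μ ν) :=
        le_apply_biInf_of_continuous ⟨_, prod_mem_couplings μ ν⟩ hφ h
    _ ≤ φ (ENNReal.ofReal θ ^ ρ) := hφmono hcost
    _ = l * (ENNReal.ofReal θ + e) ^ ρ + b := by
      simp only [φ]
      rw [← ENNReal.rpow_mul, mul_one_div_cancel hρ.ne', ENNReal.rpow_one]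

end Transport

lemma IsMeasPartition.pairwise_disjoint {β : Type*} [MeasurableSpace β] {N : ℕ}
    {R : Fin N → Set β} {X : Set β} (hR : IsMeasPartition R X) : Pairwise (Disjoint on R) :=
  fun i j hij => Set.disjoint_iff_inter_eq_empty.mpr (hR.2.2 i j hij)

section StepFunction

variable {α β : Type*} {N : ℕ} (R : Fin N → Set α)

def stepFun [AddCommMonoid β] (c : Fin N → β) (x : α) : β :=
  ∑ i, (R i).indicator (fun _ => c i) x

lemma quantMap_eq_stepFun [AddCommMonoid α] (R : Fin N → Set α) (c : Fin N → α) :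
    quantMap R c = stepFun R c := rfl

variable {R}

lemma stepFun_eq_of_mem [AddCommMonoid β] (hR : Pairwise (Disjoint on R)) (c : Fin N → β)
    {x : α} {j : Fin N} (hx : x ∈ R j) : stepFun R c x = c j := by
  rw [stepFun, Finset.sum_eq_single j (fun i _ hij => Set.indicator_of_notMem
    ((hR hij).notMem_of_mem_right hx) _) (by simp), Set.indicator_of_mem hx]

lemma stepFun_nonneg {s : Fin N → ℝ} (hs : ∀ i, 0 ≤ s i) (x : α) : 0 ≤ stepFun R s x :=
  Finset.sum_nonneg fun i _ => Set.indicator_nonneg (fun _ _ => hs i) x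

variable [MeasurableSpace α]

lemma measurable_stepFun [AddCommMonoid β] [MeasurableSpace β] [MeasurableAdd₂ β]
    (hR : ∀ i, MeasurableSet (R i)) (c : Fin N → β) : Measurable (stepFun R c) :=
  Finset.measurable_sum _ fun i _ => measurable_const.indicator (hR i)

lemma integrable_stepFun {E : Type*} [NormedAddCommGroup E] {μ : Measure α} [IsFiniteMeasure μ]
    (hR : ∀ i, MeasurableSet (R i)) (c : Fin N → E) : Integrable (stepFun R c) μ :=
  integrable_finsetSum _ fun i _ => (integrable_const (c i)).indicator (hR i)

lemma integral_stepFun {E : Type*} [NormedAddCommGroup E] [NormedSpace ℝ E] [CompleteSpace E]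
    {μ : Measure α} [IsFiniteMeasure μ] (hR : ∀ i, MeasurableSet (R i)) (c : Fin N → E) :
    ∫ x, stepFun R c x ∂μ = ∑ i, μ.real (R i) • c i := by
  unfold stepFun
  rw [integral_finsetSum _ fun i _ => (integrable_const (c i)).indicator (hR i)]
  exact Finset.sum_congr rfl fun i _ => integral_indicator_const _ (hR i)

lemma lintegral_ofReal_stepFun {μ : Measure α} [IsFiniteMeasure μ]
    (hR : ∀ i, MeasurableSet (R i)) {s : Fin N → ℝ} (hs : ∀ i, 0 ≤ s i) :
    ∫⁻ x, ENNReal.ofReal (stepFun R s x) ∂μ = ENNReal.ofReal (∑ i, μ.real (R i) * s i) := by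
  rw [← ofReal_integral_eq_lintegral_ofReal (integrable_stepFun hR s)
    (ae_of_all _ (stepFun_nonneg hs)), integral_stepFun hR]
  rfl

end StepFunction

section Quantization

variable {E : Type*} [NormedAddCommGroup E] [MeasurableSpace E] {ρ : ℝ} {N : ℕ}
  {R : Fin N → Set E} {X : Set E} {c : Fin N → E}

lemma ofReal_sum_setIntegral_rpow_inv {P : Measure E} [IsFiniteMeasure P] (hρ : 0 < ρ)
    (hP : MemLp id (ENNReal.ofReal ρ) P) (hR : IsMeasPartition R X) (hPX : ∀ᵐ x ∂P, x ∈ X) :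
    ENNReal.ofReal ((∑ k, ∫ x in R k, ‖x - c k‖ ^ ρ ∂P) ^ (1 / ρ)) =
      eLpNorm (fun x => x - quantMap R c x) (ENNReal.ofReal ρ) P := by
  have hint : ∀ k, Integrable (fun x => ‖x - c k‖ ^ ρ) P := fun k => by
    simpa [toReal_ofReal hρ.le] using
      (hP.sub (memLp_const (c k))).integrable_norm_rpow (by simpa using hρ) ofReal_ne_top
  have hnonneg : ∀ k, 0 ≤ ∫ x in R k, ‖x - c k‖ ^ ρ ∂P := fun k =>
    setIntegral_nonneg (hR.1 k) fun x _ => by positivity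
  rw [← ofReal_rpow_of_nonneg (Finset.sum_nonneg fun k _ => hnonneg k) (by positivity),
    ← lintegral_ofReal_norm_rpow_rpow_inv hρ, ofReal_sum_of_nonneg fun k _ => hnonneg k]
  congr 1
  conv_rhs => rw [← Measure.restrict_eq_self_of_ae_mem hPX, ← hR.2.1,
    lintegral_iUnion hR.1 hR.pairwise_disjoint, tsum_fintype]
  refine Finset.sum_congr rfl fun k _ => ?_
  rw [ofReal_integral_eq_lintegral_ofReal (hint k).integrableOn
    (ae_of_all _ fun x => by positivity)]
  refine setLIntegral_congr_fun (hR.1 k) fun x hx => ?_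
  rw [quantMap_eq_stepFun, stepFun_eq_of_mem hR.pairwise_disjoint c hx]

lemma eLpNorm_snd_sub_le [BorelSpace E] [SecondCountableTopology E] {p : ℝ≥0∞} (hp : 1 ≤ p)
    {μ ν : Measure E} {γ : Measure (E × E)} (hγ : γ ∈ Couplings μ ν) {Δ : E → E}
    (hΔ : Measurable Δ) :
    eLpNorm (fun z => z.2 - Δ z.1) p γ ≤
      eLpNorm (fun z => z.1 - z.2) p γ + eLpNorm (fun x => x - Δ x) p μ := by
  have hsplit :
      (fun z : E × E => z.2 - Δ z.1) = (fun z => -(z.1 - z.2)) + fun z => z.1 - Δ z.1 := by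
    ext z; simp only [Pi.add_apply]; abel
  rw [hsplit, ← hγ.2.1, eLpNorm_map_measure (g := fun x => x - Δ x)
    (measurable_id.sub hΔ).aestronglyMeasurable measurable_fst.aemeasurable]
  refine (eLpNorm_add_le ?_ ?_ hp).trans_eq ?_
  · exact (measurable_fst.sub measurable_snd).neg.aestronglyMeasurable
  · exact (measurable_fst.sub (hΔ.comp measurable_fst)).aestronglyMeasurable
  · rw [← eLpNorm_neg (f := fun z : E × E => z.1 - z.2)]; rfl

lemma norm_sub_quantMap_rpow_le {F : Type*} [NormedAddCommGroup F] (hR : IsMeasPartition R X)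
    {f : E → F} {lam : ℝ} {s : Fin N → ℝ}
    (hs : ∀ j, ∀ ξ ∈ X, ‖f ξ - f (c j)‖ ^ ρ - lam * ‖ξ - c j‖ ^ ρ ≤ s j) {x y : E}
    (hx : x ∈ X) (hy : y ∈ X) :
    ‖f y - f (quantMap R c x)‖ ^ ρ ≤ lam * ‖y - quantMap R c x‖ ^ ρ + stepFun R s x := by
  obtain ⟨j, hj⟩ := Set.mem_iUnion.mp (hR.2.1.symm ▸ hx)
  rw [quantMap_eq_stepFun, stepFun_eq_of_mem hR.pairwise_disjoint c hj,
    stepFun_eq_of_mem hR.pairwise_disjoint s hj]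
  linarith [hs j y hy]

lemma transportCost_map_quantMap_le {F : Type*} [NormedAddCommGroup F] [MeasurableSpace F]
    [BorelSpace F] [SecondCountableTopology F] [BorelSpace E] [SecondCountableTopology E]
    (hρ : 1 ≤ ρ) (hR : IsMeasPartition R X) {P Q : Measure E} [IsFiniteMeasure P]
    (hPX : ∀ᵐ x ∂P, x ∈ X) (hQX : ∀ᵐ y ∂Q, y ∈ X) {γ : Measure (E × E)}
    (hγ : γ ∈ Couplings P Q) {f : E → F} (hf : Measurable f) {lam : ℝ} (hlam : 0 ≤ lam)
    {s : Fin N → ℝ} (hs0 : ∀ j, 0 ≤ s j)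
    (hs : ∀ j, ∀ ξ ∈ X, ‖f ξ - f (c j)‖ ^ ρ - lam * ‖ξ - c j‖ ^ ρ ≤ s j) :
    transportCost ρ (Q.map f) ((P.map (quantMap R c)).map f) ≤
      ENNReal.ofReal lam * ((∫⁻ z, ENNReal.ofReal (‖z.1 - z.2‖ ^ ρ) ∂γ) ^ (1 / ρ) +
        eLpNorm (fun x => x - quantMap R c x) (ENNReal.ofReal ρ) P) ^ ρ +
      ENNReal.ofReal (∑ j, P.real (R j) * s j) := by
  have hρ0 : 0 < ρ := by linarith
  set Δ := quantMap R c
  have hΔ : Measurable Δ := measurable_stepFun hR.1 c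
  have hγX : ∀ᵐ z ∂γ, z.1 ∈ X ∧ z.2 ∈ X :=
    (ae_of_ae_map measurable_fst.aemeasurable (hγ.2.1 ▸ hPX)).and
      (ae_of_ae_map measurable_snd.aemeasurable (hγ.2.2 ▸ hQX))
  have hpointwise : ∀ᵐ z ∂γ, ENNReal.ofReal (‖f z.2 - f (Δ z.1)‖ ^ ρ) ≤
      ENNReal.ofReal lam * ENNReal.ofReal (‖z.2 - Δ z.1‖ ^ ρ) +
        ENNReal.ofReal (stepFun R s z.1) := hγX.mono fun z hz => by
    rw [← ofReal_mul hlam]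
    exact (ofReal_le_ofReal (norm_sub_quantMap_rpow_le hR hs hz.1 hz.2)).trans ofReal_add_le
  have hstep : Measurable fun z : E × E => ENNReal.ofReal (stepFun R s z.1) :=
    ((measurable_stepFun hR.1 s).comp measurable_fst).ennreal_ofReal
  calc transportCost ρ (Q.map f) ((P.map Δ).map f)
      ≤ ∫⁻ z, ENNReal.ofReal (‖f z.2 - f (Δ z.1)‖ ^ ρ) ∂γ := by
        rw [Measure.map_map hf hΔ]
        exact transportCost_le_lintegral_map hγ hf (hf.comp hΔ)
    _ ≤ ∫⁻ z, ENNReal.ofReal lam * ENNReal.ofReal (‖z.2 - Δ z.1‖ ^ ρ) +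
          ENNReal.ofReal (stepFun R s z.1) ∂γ := lintegral_mono_ae hpointwise
    _ = ENNReal.ofReal lam * eLpNorm (fun z => z.2 - Δ z.1) (ENNReal.ofReal ρ) γ ^ ρ +
          ENNReal.ofReal (∑ j, P.real (R j) * s j) := by
        rw [lintegral_add_right _ hstep, lintegral_const_mul' _ _ ofReal_ne_top,
          lintegral_ofReal_norm_rpow hρ0, ← lintegral_ofReal_stepFun hR.1 hs0, ← hγ.2.1,
          lintegral_map ((measurable_stepFun hR.1 s).ennreal_ofReal) measurable_fst]
    _ ≤ _ := by
        rw [lintegral_ofReal_norm_rpow_rpow_inv hρ0]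
        gcongr
        exact eLpNorm_snd_sub_le (by simpa using hρ) hγ hΔ

end Quantization

-- The infimum over `λ` and the inner suprema are rendered by quantifying over all `λ ≥ 0` and
-- all upper bounds `s j` of the inner expressions.
theorem stmt13_general {d q N : ℕ} (ρ : ℝ) (hρ : 1 ≤ ρ) (θ : ℝ) (hθ : 0 ≤ θ)
    (X : Set (Euc d)) (hXm : MeasurableSet X)
    (P : Measure (Euc d)) (hP : IsProbabilityMeasure P) (hPX : P X = 1)
    (hPm : HasFiniteMoment ρ P)
    (R : Fin N → Set (Euc d)) (hR : IsMeasPartition R X)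
    (c : Fin N → Euc d) (hc : ∀ k, c k ∈ X)
    (f : Euc d → Euc q) (hf : Measurable f)
    (θd : ℝ) (hθd : θd = (∑ k, ∫ x in R k, ‖x - c k‖ ^ ρ ∂P) ^ (1/ρ)) :
    ∀ Q : Measure (Euc d), IsProbabilityMeasure Q → Q X = 1 → HasFiniteMoment ρ Q →
      Wass ρ P Q ≤ θ → HasFiniteMoment ρ (Q.map f) →
      ∀ lam : ℝ, 0 ≤ lam → ∀ s : Fin N → ℝ,
        (∀ j, ∀ ξ ∈ X, ‖f ξ - f (c j)‖ ^ ρ - lam * ‖ξ - c j‖ ^ ρ ≤ s j) →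
        Wass ρ (Q.map f) ((P.map (quantMap R c)).map f) ≤
          (lam * (θ + θd) ^ ρ + ∑ j, (P (R j)).toReal * s j) ^ (1/ρ) := by
  intro Q hQ hQX hQm hWθ _ lam hlam s hs
  have hρ0 : 0 < ρ := by linarith
  have hs0 (j : Fin N) : 0 ≤ s j := by simpa [Real.zero_rpow hρ0.ne'] using hs j (c j) (hc j)
  have hae {μ : Measure (Euc d)} [IsProbabilityMeasure μ] (hμ : μ X = 1) : ∀ᵐ x ∂μ, x ∈ X := by
    rwa [ae_mem_iff_measure_eq hXm.nullMeasurableSet, measure_univ]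
  have hθd0 : 0 ≤ θd := hθd ▸ Real.rpow_nonneg (Finset.sum_nonneg fun k _ =>
    setIntegral_nonneg (hR.1 k) fun x _ => Real.rpow_nonneg (norm_nonneg _) ρ) _
  have hπs : 0 ≤ ∑ j, (P (R j)).toReal * s j :=
    Finset.sum_nonneg fun j _ => mul_nonneg toReal_nonneg (hs0 j)
  have hθd' := hθd ▸ ofReal_sum_setIntegral_rpow_inv (c := c) hρ0 (hPm.memLp hρ0) hR (hae hPX)
  have hcost := le_of_forall_mem_couplings hρ0 hPm hQm hWθ ofReal_ne_top fun γ hγ => by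
    simpa only [measureReal_def] using
      transportCost_map_quantMap_le hρ hR (hae hPX) (hae hQX) hγ hf hlam hs0 hs
  refine wass_le_of_transportCost_le hρ0 (by positivity) (hcost.trans_eq ?_)
  rw [← hθd', ← ofReal_add hθ hθd0, ofReal_rpow_of_nonneg (by positivity) hρ0.le,
    ← ofReal_mul hlam, ← ofReal_add (by positivity) hπs]

/-- Proposition: dual bound. With `π_j = P(R_j)` and
`θ_d = (Σ_k ∫_{R_k} ‖x − c_k‖^ρ dP)^{1/ρ}`, for every `Q ∈ B_θ(P)`,
`W_ρ(f#Q, f#Δ_{R,C}#P) ≤ (inf_{λ ≥ 0} { λ (θ + θ_d)^ρ +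
  Σ_j π_j sup_{ξ ∈ X} (‖f(ξ) − f(c_j)‖^ρ − λ ‖ξ − c_j‖^ρ) })^{1/ρ}`.
The infimum over `λ` and the inner suprema are rendered by quantifying over all
`λ ≥ 0` and all upper bounds `s j` of the inner expressions. -/
theorem stmt13 {d q N : ℕ} (ρ : ℝ) (hρ : 1 ≤ ρ) (θ : ℝ) (hθ : 0 ≤ θ)
    (X : Set (Euc d)) (hXm : MeasurableSet X) (Y : Set (Euc q))
    (P : Measure (Euc d)) (hP : IsProbabilityMeasure P) (hPX : P X = 1)
    (hPm : HasFiniteMoment ρ P)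
    (R : Fin N → Set (Euc d)) (hR : IsMeasPartition R X)
    (c : Fin N → Euc d) (hc : ∀ k, c k ∈ X)
    (f : Euc d → Euc q) (hf : Measurable f) (hfXY : Set.MapsTo f X Y)
    (hfΔm : HasFiniteMoment ρ ((P.map (quantMap R c)).map f))
    (θd : ℝ) (hθd : θd = (∑ k, ∫ x in R k, ‖x - c k‖ ^ ρ ∂P) ^ (1/ρ)) :
    ∀ Q : Measure (Euc d), IsProbabilityMeasure Q → Q X = 1 → HasFiniteMoment ρ Q →
      Wass ρ P Q ≤ θ → HasFiniteMoment ρ (Q.map f) →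
      ∀ lam : ℝ, 0 ≤ lam → ∀ s : Fin N → ℝ,
        (∀ j, ∀ ξ ∈ X, ‖f ξ - f (c j)‖ ^ ρ - lam * ‖ξ - c j‖ ^ ρ ≤ s j) →
        Wass ρ (Q.map f) ((P.map (quantMap R c)).map f) ≤
          (lam * (θ + θd) ^ ρ + ∑ j, (P (R j)).toReal * s j) ^ (1/ρ) :=
  stmt13_general ρ hρ θ hθ X hXm P hP hPX hPm R hR c hc f hf θd hθd
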